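/- arXiv:1106.4068 — 2 statements merged into one kernel-verified Lean document; each statement's English description precedes it below -/
import Mathlib

section
/- Every finite-dimensional n-plectic vector space (V, ω) contains, for each k with 1 ≤ k ≤ n, a k-Lagrangian subspace. -/
/-!
A maximal `k`-isotropic subspace `L` is `k`-Lagrangian. Indeed, if `x ∈ L^{⊥,k}`, expand `ω` on
`L + ℝx` multilinearly: terms containing `x` twice vanish by alternation, terms containing it once
vanish because `x ∈ L^{⊥,k}` once `x` is moved to the front, and the remaining terms vanish by
isotropy of `L`. So `L + ℝx` is `k`-isotropic and `x ∈ L` by maximality. Maximal `k`-isotropic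
subspaces exist by Zorn's lemma, since isotropy only involves finitely many vectors at a time.
-/

/-- The `k`-orthogonal complement `W^{⊥,k}` of a subspace `W` with respect to an
alternating `(n+1)`-form `ω`. -/
def kPerp {V : Type*} [AddCommGroup V] [Module ℝ V] {n : ℕ}
    (ω : AlternatingMap ℝ V ℝ (Fin (n + 1))) (W : Submodule ℝ V)
    (k : ℕ) (hk : k ≤ n) : Set V :=
  {v | ∀ w : Fin k → V, (∀ i, w i ∈ W) → ∀ u : Fin (n - k) → V,
    ω (Fin.cons v (Fin.append w u) ∘
      Fin.cast (show n + 1 = k + (n - k) + 1 by omega)) = 0}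

theorem Fin.append_update_left {α : Type*} {a b : ℕ} (m : Fin a → α) (u : Fin b → α) (i : Fin a)
    (x : α) :
    Fin.append (Function.update m i x) u = Function.update (Fin.append m u) (Fin.castAdd b i) x := by
  funext j
  refine Fin.addCases (fun j => ?_) (fun j => ?_) j
  · rcases eq_or_ne j i with rfl | h
    · simp
    · simp [h, Function.update_of_ne]
  · have : Fin.natAdd a j ≠ Fin.castAdd b i := Fin.ne_of_val_ne (by simp; omega)
    simp [Function.update_of_ne this]

namespace AlternatingMap

variable {R M N : Type*} [CommRing R] [AddCommGroup M] [Module R M] [AddCommGroup N] [Module R N]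

def VanishesOn {ι : Type*} (φ : M [⋀^ι]→ₗ[R] N) (L : Submodule R M) : Prop :=
  ∀ m : ι → M, (∀ i, m i ∈ L) → φ m = 0

def fixAppend {a b : ℕ} (Ω : M [⋀^Fin (a + b)]→ₗ[R] N) (u : Fin b → M) : M [⋀^Fin a]→ₗ[R] N where
  toMultilinearMap := .mk' (fun m => Ω (Fin.append m u))
    (fun m i x y => by simp only [Fin.append_update_left, map_update_add])
    (fun m i c x => by simp only [Fin.append_update_left, map_update_smul])
  map_eq_zero_of_eq' m i j hij hne :=
    Ω.map_eq_zero_of_eq _ (by simpa using hij) ((Fin.castAdd_injective a b).ne hne)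

@[simp]
theorem fixAppend_apply {a b : ℕ} (Ω : M [⋀^Fin (a + b)]→ₗ[R] N) (u : Fin b → M)
    (m : Fin a → M) : Ω.fixAppend u m = Ω (Fin.append m u) :=
  rfl

theorem curryLeft_curryLeft_swap {k : ℕ} (φ : M [⋀^Fin (k + 2)]→ₗ[R] N) (a b : M) :
    (φ.curryLeft a).curryLeft b = -(φ.curryLeft b).curryLeft a := by
  have h := φ.curryLeft_same (a + b)
  simp only [map_add, curryLeft_add, LinearMap.add_apply, curryLeft_same, zero_add, add_zero] at h
  exact eq_neg_of_add_eq_zero_right h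

theorem vanishesOn_iff_forall_curryLeft {k : ℕ} (φ : M [⋀^Fin (k + 1)]→ₗ[R] N)
    (L : Submodule R M) : φ.VanishesOn L ↔ ∀ v ∈ L, (φ.curryLeft v).VanishesOn L := by
  refine ⟨fun h v hv w hw => h _ (Fin.cases hv hw), fun h m hm => ?_⟩
  rw [← Fin.cons_self_tail m]
  exact h _ (hm 0) _ (fun i => hm i.succ)

theorem forall_curryLeft_vanishesOn_sup_span_singleton {k : ℕ} {φ : M [⋀^Fin (k + 1)]→ₗ[R] N}
    {L S : Submodule R M} {x : M} (hL : ∀ l ∈ L, (φ.curryLeft l).VanishesOn S)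
    (hx : (φ.curryLeft x).VanishesOn S) : ∀ v ∈ L ⊔ R ∙ x, (φ.curryLeft v).VanishesOn S := by
  intro v hv w hw
  obtain ⟨l, hl, y, hy, rfl⟩ := Submodule.mem_sup.mp hv
  obtain ⟨t, rfl⟩ := Submodule.mem_span_singleton.mp hy
  rw [map_add, map_smul, add_apply, smul_apply, hL l hl w hw, hx w hw, smul_zero, add_zero]

theorem VanishesOn.sup_span_singleton {L : Submodule R M} {x : M} {k : ℕ}
    {φ : M [⋀^Fin (k + 1)]→ₗ[R] N} (hL : φ.VanishesOn L) (hx : (φ.curryLeft x).VanishesOn L) :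
    φ.VanishesOn (L ⊔ R ∙ x) := by
  induction k with
  | zero =>
    rw [vanishesOn_iff_forall_curryLeft] at hL ⊢
    exact forall_curryLeft_vanishesOn_sup_span_singleton (fun l hl w _ => hL l hl w finZeroElim)
      fun w _ => hx w finZeroElim
  | succ k ih =>
    have hL' := (vanishesOn_iff_forall_curryLeft φ L).mp hL
    have hx' := (vanishesOn_iff_forall_curryLeft _ L).mp hx
    refine (vanishesOn_iff_forall_curryLeft φ _).mpr
      (forall_curryLeft_vanishesOn_sup_span_singleton (fun l hl => ih (hL' l hl) ?_) (ih hx ?_))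
    · intro w hw
      rw [curryLeft_curryLeft_swap, neg_apply, hx' l hl w hw, neg_zero]
    · intro w _
      rw [curryLeft_same, zero_apply]

theorem vanishesOn_sSup {ι : Type*} [Finite ι] (φ : M [⋀^ι]→ₗ[R] N)
    {c : Set (Submodule R M)} (hne : c.Nonempty) (hdir : DirectedOn (· ≤ ·) c)
    (h : ∀ L ∈ c, φ.VanishesOn L) : φ.VanishesOn (sSup c) := by
  intro m hm
  have hspan : Submodule.span R (Set.range m) ≤ sSup c :=
    Submodule.span_le.mpr (Set.range_subset_iff.mpr hm)
  obtain ⟨L, hLc, hmL⟩ := (CompleteLattice.isCompactElement_iff_le_of_directed_sSup_le _ _).mp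
    (Submodule.finite_span_isCompactElement _ (Set.finite_range m)) c hne hdir hspan
  exact h L hLc m fun i => hmL (Submodule.subset_span (Set.mem_range_self i))

end AlternatingMap

section kPerp

variable {V : Type*} [AddCommGroup V] [Module ℝ V] {n : ℕ} (ω : AlternatingMap ℝ V ℝ (Fin (n + 1)))
  {k : ℕ}

/-- The `(k+1)`-form `ω(·, …, ·, u)` obtained by freezing the last `n - k` arguments of `ω`. -/
def sliceForm (hk : k ≤ n) (u : Fin (n - k) → V) : V [⋀^Fin (k + 1)]→ₗ[ℝ] ℝ :=
  (ω.domDomCongr (finCongr (by omega : n + 1 = k + 1 + (n - k)))).fixAppend u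

theorem mem_kPerp_iff (hk : k ≤ n) (W : Submodule ℝ V) (v : V) :
    v ∈ kPerp ω W k hk ↔ ∀ u, ((sliceForm ω hk u).curryLeft v).VanishesOn W := by
  simp only [kPerp, Set.mem_ofPred_eq, AlternatingMap.VanishesOn, sliceForm,
    AlternatingMap.curryLeft_apply_apply, AlternatingMap.fixAppend_apply,
    AlternatingMap.domDomCongr_apply, Matrix.vecCons, Fin.append_cons]
  exact ⟨fun h u w hw => h w hw u, fun h w hw u => h u w hw⟩

def IsKIsotropic (hk : k ≤ n) (L : Submodule ℝ V) : Prop :=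
  (L : Set V) ⊆ kPerp ω L k hk

theorem isKIsotropic_iff (hk : k ≤ n) (L : Submodule ℝ V) :
    IsKIsotropic ω hk L ↔ ∀ u, (sliceForm ω hk u).VanishesOn L := by
  simp only [IsKIsotropic, Set.subset_def, SetLike.mem_coe, mem_kPerp_iff,
    AlternatingMap.vanishesOn_iff_forall_curryLeft]
  exact ⟨fun h u v hv => h v hv u, fun h v hv u => h u v hv⟩

theorem isKIsotropic_bot (hk : k ≤ n) : IsKIsotropic ω hk ⊥ :=
  (isKIsotropic_iff ω hk ⊥).mpr fun u _ hm =>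
    (sliceForm ω hk u).map_coord_zero 0 ((Submodule.mem_bot ℝ).mp (hm 0))

theorem isKIsotropic_sSup {hk : k ≤ n} {c : Set (Submodule ℝ V)} (hne : c.Nonempty)
    (hdir : DirectedOn (· ≤ ·) c) (h : ∀ L ∈ c, IsKIsotropic ω hk L) :
    IsKIsotropic ω hk (sSup c) :=
  (isKIsotropic_iff ω hk _).mpr fun u => (sliceForm ω hk u).vanishesOn_sSup hne hdir
    fun L hL => (isKIsotropic_iff ω hk L).mp (h L hL) u

theorem exists_maximal_isKIsotropic (hk : k ≤ n) : ∃ L, Maximal (IsKIsotropic ω hk) L := by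
  obtain ⟨L, -, hL⟩ := zorn_le_nonempty₀ {L | IsKIsotropic ω hk L}
    (fun c hcs hc L hL => ⟨sSup c, isKIsotropic_sSup ω ⟨L, hL⟩ hc.directedOn hcs,
      fun _ => le_sSup⟩) ⊥ (isKIsotropic_bot ω hk)
  exact ⟨L, hL⟩

variable {ω}

theorem IsKIsotropic.sup_span_singleton {hk : k ≤ n} {L : Submodule ℝ V} {x : V}
    (hL : IsKIsotropic ω hk L) (hx : x ∈ kPerp ω L k hk) : IsKIsotropic ω hk (L ⊔ ℝ ∙ x) := by
  rw [isKIsotropic_iff] at hL ⊢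
  rw [mem_kPerp_iff] at hx
  exact fun u => (hL u).sup_span_singleton (hx u)

theorem Maximal.coe_eq_kPerp {hk : k ≤ n} {L : Submodule ℝ V}
    (hL : Maximal (IsKIsotropic ω hk) L) : (L : Set V) = kPerp ω L k hk := by
  refine hL.prop.antisymm fun x hx => ?_
  have hle : L ⊔ ℝ ∙ x ≤ L := hL.le_of_ge (hL.prop.sup_span_singleton hx) le_sup_left
  exact hle (Submodule.mem_sup_right (Submodule.mem_span_singleton_self x))

end kPerp

theorem exists_kLagrangian_general
    {V : Type*} [AddCommGroup V] [Module ℝ V] {n : ℕ}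
    (ω : AlternatingMap ℝ V ℝ (Fin (n + 1)))
    (k : ℕ) (hkn : k ≤ n) :
    ∃ L : Submodule ℝ V, (L : Set V) = kPerp ω L k hkn := by
  obtain ⟨L, hL⟩ := exists_maximal_isKIsotropic ω hkn
  exact ⟨L, hL.coe_eq_kPerp⟩

/-- every finite-dimensional `n`-plectic vector space `(V, ω)` contains,
for each `1 ≤ k ≤ n`, a `k`-Lagrangian subspace. -/
theorem exists_kLagrangian
    {V : Type*} [AddCommGroup V] [Module ℝ V] [FiniteDimensional ℝ V] {n : ℕ}
    (ω : AlternatingMap ℝ V ℝ (Fin (n + 1)))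
    (hnondeg : ∀ v : V, (∀ u : Fin n → V, ω (Fin.cons v u) = 0) → v = 0)
    (k : ℕ) (hk1 : 1 ≤ k) (hkn : k ≤ n) :
    ∃ L : Submodule ℝ V, (L : Set V) = kPerp ω L k hkn :=
  exists_kLagrangian_general ω k hkn
end

section
/- Let n ≥ 1 and let (V, ω) be an n-plectic vector space with dim V = n + 1. Then a subspace W ⊆ V is n-Lagrangian if and only if dim W = n. -/
private lemma auxCast {V : Type*} {n : ℕ} (v : V) (w : Fin n → V)
    (u : Fin (n - n) → V) :
    (Fin.cons v (Fin.append w u) ∘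
      Fin.cast (show n + 1 = n + (n - n) + 1 by omega)) = Fin.cons v w := by
  funext i
  obtain ⟨iv, hi⟩ := i
  cases iv with
  | zero => rfl
  | succ k =>
    have hk : k < n := by omega
    simp only [Function.comp_apply, Fin.cast_mk]
    have h1 : (⟨k + 1, by omega⟩ : Fin (n + (n - n) + 1))
        = Fin.succ (Fin.castAdd (n - n) ⟨k, hk⟩) := rfl
    have h2 : (⟨k + 1, hi⟩ : Fin (n + 1)) = Fin.succ ⟨k, hk⟩ := rfl
    rw [h1, h2, Fin.cons_succ, Fin.cons_succ, Fin.append_left]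

private lemma mem_kPerp_iff_s4 {V : Type*} [AddCommGroup V] [Module ℝ V] {n : ℕ}
    (ω : AlternatingMap ℝ V ℝ (Fin (n + 1))) (W : Submodule ℝ V) (v : V) :
    v ∈ kPerp ω W n le_rfl ↔
      ∀ w : Fin n → V, (∀ i, w i ∈ W) → ω (Fin.cons v w) = 0 := by
  constructor
  · intro h w hw
    have := h w hw (fun _ => v)
    rwa [auxCast] at this
  · intro h w hw u
    rw [auxCast]
    exact h w hw

/-- if `(V, ω)` is an `n`-plectic vector space with `dim V = n + 1`
(`n ≥ 1`), then a subspace `W` is `n`-Lagrangian, i.e. `W = W^{⊥,n}`, if and only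
if `dim W = n`. -/
theorem nLagrangian_iff_dim_eq
    {V : Type*} [AddCommGroup V] [Module ℝ V] [FiniteDimensional ℝ V]
    {n : ℕ} (hn : 1 ≤ n) (hdim : Module.finrank ℝ V = n + 1)
    (ω : AlternatingMap ℝ V ℝ (Fin (n + 1)))
    (hnondeg : ∀ v : V, (∀ u : Fin n → V, ω (Fin.cons v u) = 0) → v = 0)
    (W : Submodule ℝ V) :
    (W : Set V) = kPerp ω W n le_rfl ↔ Module.finrank ℝ W = n := by
  have hVnt : Nontrivial V := by
    apply Module.nontrivial_of_finrank_pos (R := ℝ)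
    omega
  -- key: if a family of `m` vectors lies in `W` and `m > finrank W`, it is dependent
  have hdep : ∀ {m : ℕ} (f : Fin m → V), (∀ i, f i ∈ W) →
      Module.finrank ℝ W < m → ¬ LinearIndependent ℝ f := by
    intro m f hf hm hind
    have hind' : LinearIndependent ℝ (fun i => (⟨f i, hf i⟩ : W)) :=
      LinearIndependent.of_comp W.subtype
        (show LinearIndependent ℝ (⇑W.subtype ∘ fun i => (⟨f i, hf i⟩ : W)) from hind)
    have := hind'.fintype_card_le_finrank
    simp [Fintype.card_fin] at this
    omega
  constructor
  · -- W = perp → finrank W = n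
    intro hset
    have hle : Module.finrank ℝ W ≤ n + 1 := hdim ▸ Submodule.finrank_le W
    by_contra hne
    rcases lt_or_gt_of_ne hne with hlt | hgt
    · -- finrank W < n : perp = univ so W = ⊤, contradiction
      have hWtop : W = ⊤ := by
        rw [Submodule.eq_top_iff']
        intro v
        have : v ∈ kPerp ω W n le_rfl := by
          rw [mem_kPerp_iff_s4]
          intro w hw
          apply AlternatingMap.map_linearDependent
          intro hind
          have : LinearIndependent ℝ w := by
            rw [linearIndependent_fin_cons] at hind
            exact hind.1
          exact hdep w hw (by omega) this
        rw [← hset] at this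
        exact this
      rw [hWtop] at hlt
      rw [finrank_top, hdim] at hlt
      omega
    · -- finrank W = n + 1 : W = ⊤, but perp = {0}
      have hWrank : Module.finrank ℝ W = n + 1 := by omega
      have hWtop : W = ⊤ := Submodule.eq_top_of_finrank_eq (by rw [hWrank, hdim])
      obtain ⟨x, hx⟩ := exists_ne (0 : V)
      have hxW : x ∈ (W : Set V) := by rw [hWtop]; trivial
      rw [hset, mem_kPerp_iff_s4] at hxW
      exact hx (hnondeg x fun u => hxW u (fun i => by rw [hWtop]; trivial))
  · -- finrank W = n → W = perp
    intro hW
    apply Set.eq_of_subset_of_subset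
    · -- W ⊆ perp
      intro v hv
      rw [mem_kPerp_iff_s4]
      intro w hw
      apply AlternatingMap.map_linearDependent
      apply hdep (Fin.cons v w)
      · intro i
        refine Fin.cases ?_ (fun j => ?_) i
        · simpa using hv
        · simpa using hw j
      · simp [hW, Fintype.card_fin]
    · -- perp ⊆ W
      intro v hv
      by_contra hvW
      rw [mem_kPerp_iff_s4] at hv
      -- basis of W, coerced to V
      obtain b := Module.finBasisOfFinrankEq ℝ W hW
      set w : Fin n → V := fun i => (b i : V) with hwdef
      have hwW : ∀ i, w i ∈ W := fun i => (b i).2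
      have hindw : LinearIndependent ℝ w :=
        b.linearIndependent.map' W.subtype (Submodule.ker_subtype W)
      have hspan : Submodule.span ℝ (Set.range w) = W := by
        have : Submodule.span ℝ (Set.range w) =
            Submodule.map W.subtype (Submodule.span ℝ (Set.range b)) := by
          rw [Submodule.map_span]
          congr 1
          rw [← Set.range_comp]
          rfl
        rw [this, b.span_eq, Submodule.map_top, Submodule.range_subtype]
      have hind : LinearIndependent ℝ (Fin.cons v w) := by
        rw [linearIndependent_fin_cons]
        exact ⟨hindw, by rw [hspan]; exact hvW⟩
      -- this gives a basis of V
      have hcard : Fintype.card (Fin (n + 1)) = Module.finrank ℝ V := by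
        simp [hdim]
      let e := basisOfLinearIndependentOfCardEqFinrank hind hcard
      have he : ⇑e = Fin.cons v w :=
        coe_basisOfLinearIndependentOfCardEqFinrank hind hcard
      have hω0 : ω = 0 := by
        have := AlternatingMap.eq_smul_basis_det e ω
        rw [he, hv w hwW, zero_smul] at this
        exact this
      obtain ⟨x, hx⟩ := exists_ne (0 : V)
      exact hx (hnondeg x fun u => by rw [hω0]; rfl)
end
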